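/- Let c, w₄, D₃ be positive constants and let r : [0,∞) → ℝ be differentiable with r'(t) = r(t)²·(c − w₄·r(t)/D₃) for all t ≥ 0. If r(0) > 0, then r(t) → c·D₃/w₄ as t → ∞. -/

import Mathlib

/-!
Write `f x = x² (c - w₄ x / D₃) = (w₄ / D₃) x² (K - x)` with `K = c D₃ / w₄`, so `f ≥ 0`
below `K` and `f ≤ 0` above it. Since `f` is strictly negative just above `K` and strictly
positive just below it, a solution cannot cross `K`; it is therefore monotone and bounded,
hence convergent. Its limit `L` is a zero of `f`, for otherwise `r' → f L ≠ 0` would make `r`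
grow linearly; the only zero of `f` between `r 0 > 0` and `K` is `K` itself.
-/

open Set Filter Topology

def IsForwardSolution (f r : ℝ → ℝ) : Prop :=
  ∀ t ∈ Ici (0 : ℝ), HasDerivWithinAt r (f (r t)) (Ici 0) t

theorem MonotoneOn.exists_tendsto_atTop {r : ℝ → ℝ} {a : ℝ} (hmono : MonotoneOn r (Ici a))
    (hbdd : BddAbove (r '' Ici a)) : ∃ L, Tendsto r atTop (𝓝 L) := by
  have hs : Monotone fun t => r (max t a) := fun s t hst =>
    hmono (le_max_right s a) (le_max_right t a) (max_le_max_right a hst)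
  have hbdd' : BddAbove (range fun t => r (max t a)) :=
    hbdd.mono (range_subset_iff.2 fun t => mem_image_of_mem r (le_max_right t a))
  refine ⟨_, (tendsto_atTop_ciSup hs hbdd').congr' ?_⟩
  filter_upwards [eventually_ge_atTop a] with t ht
  rw [max_eq_left ht]

namespace IsForwardSolution

variable {f r : ℝ → ℝ}

theorem neg (hr : IsForwardSolution f r) : IsForwardSolution (fun x => -f (-x)) (-r) := by
  intro t ht
  simpa only [Pi.neg_apply, neg_neg] using (hr t ht).neg

theorem continuousOn (hr : IsForwardSolution f r) : ContinuousOn r (Ici 0) :=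
  fun t ht => (hr t ht).continuousWithinAt

theorem hasDerivWithinAt_Ici (hr : IsForwardSolution f r) {t : ℝ} (ht : 0 ≤ t) :
    HasDerivWithinAt r (f (r t)) (Ici t) t :=
  (hr t ht).mono (Ici_subset_Ici.2 ht)

theorem le_of_apply_neg (hr : IsForwardSolution f r) {b : ℝ} (hb : f b < 0) (h0 : r 0 ≤ b)
    {t : ℝ} (ht : 0 ≤ t) : r t ≤ b :=
  image_le_of_deriv_right_lt_deriv_boundary' (hr.continuousOn.mono Icc_subset_Ici_self)
    (fun _ hs => hr.hasDerivWithinAt_Ici hs.1) h0 continuousOn_const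
    (fun s _ => hasDerivWithinAt_const s _ b) (fun _ _ hs => hs ▸ hb) ⟨ht, le_rfl⟩

theorem le_of_eventually_neg (hr : IsForwardSolution f r) {K : ℝ}
    (hK : ∀ᶠ x in 𝓝[>] K, f x < 0) (h0 : r 0 ≤ K) {t : ℝ} (ht : 0 ≤ t) : r t ≤ K :=
  -- the strict barrier at every `b` slightly above `K`, then `b ↓ K`
  ge_of_tendsto (tendsto_nhdsWithin_of_tendsto_nhds tendsto_id) <|
    (hK.and self_mem_nhdsWithin).mono fun _ hb => hr.le_of_apply_neg hb.1 (h0.trans hb.2.le) ht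

theorem add_mul_sub_le (hr : IsForwardSolution f r) {T ε : ℝ} (hT : 0 ≤ T)
    (hε : ∀ t, T ≤ t → ε ≤ f (r t)) {t : ℝ} (ht : T ≤ t) : r T + ε * (t - T) ≤ r t := by
  have hline : ∀ s, HasDerivWithinAt (fun s => r T + ε * (s - T)) ε (Ici s) s := fun s => by
    simpa using (((hasDerivAt_id s).sub_const T).const_mul ε).const_add (r T) |>.hasDerivWithinAt
  refine image_le_of_deriv_right_le_deriv_boundary (by fun_prop) (fun s _ => hline s)
    (by simp) (hr.continuousOn.mono fun s hs => hT.trans hs.1)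
    (fun s hs => hr.hasDerivWithinAt_Ici (hT.trans hs.1)) (fun s hs => hε s hs.1) ⟨ht, le_rfl⟩

theorem monotoneOn (hr : IsForwardSolution f r) (hf : ∀ t, 0 ≤ t → 0 ≤ f (r t)) :
    MonotoneOn r (Ici 0) := fun s hs t _ hst => by
  simpa using hr.add_mul_sub_le hs (fun u hu => hf u (hs.trans hu)) hst

theorem tendsto_atTop (hr : IsForwardSolution f r) {l : ℝ} (hl : 0 < l)
    (hfr : Tendsto (f ∘ r) atTop (𝓝 l)) : Tendsto r atTop atTop := by
  obtain ⟨T, hT⟩ := eventually_atTop.1 <|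
    (hfr.eventually (lt_mem_nhds (half_lt_self hl))).and (eventually_ge_atTop 0)
  have hline : Tendsto (fun t => r T + l / 2 * (t - T)) atTop atTop :=
    tendsto_atTop_add_const_left _ _ <|
      (tendsto_atTop_add_const_right _ _ tendsto_id).const_mul_atTop (half_pos hl)
  refine tendsto_atTop_mono' _ ?_ hline
  filter_upwards [eventually_ge_atTop T] with t ht
  exact hr.add_mul_sub_le (hT T le_rfl).2 (fun s hs => (hT s hs).1.le) ht

theorem apply_nonpos_of_tendsto (hr : IsForwardSolution f r) {L : ℝ} (hf : ContinuousAt f L)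
    (hL : Tendsto r atTop (𝓝 L)) : f L ≤ 0 :=
  not_lt.1 fun hpos =>
    not_tendsto_nhds_of_tendsto_atTop (hr.tendsto_atTop hpos (hf.tendsto.comp hL)) L hL

theorem tendsto_of_le (hr : IsForwardSolution f r) (hf : Continuous f) {K : ℝ} (h0 : r 0 ≤ K)
    (hnonneg : ∀ x ≤ K, 0 ≤ f x) (hK : ∀ᶠ x in 𝓝[>] K, f x < 0)
    (hzero : ∀ x ∈ Ico (r 0) K, f x ≠ 0) : Tendsto r atTop (𝓝 K) := by
  have hle : ∀ t, 0 ≤ t → r t ≤ K := fun t ht => hr.le_of_eventually_neg hK h0 ht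
  have hmono : MonotoneOn r (Ici 0) := hr.monotoneOn fun t ht => hnonneg _ (hle t ht)
  obtain ⟨L, hL⟩ := hmono.exists_tendsto_atTop ⟨K, forall_mem_image.2 hle⟩
  have hr0L : r 0 ≤ L := ge_of_tendsto hL <|
    (eventually_ge_atTop 0).mono fun t ht => hmono self_mem_Ici ht ht
  have hLK : L ≤ K := le_of_tendsto hL ((eventually_ge_atTop 0).mono hle)
  have hfL : f L = 0 := (hr.apply_nonpos_of_tendsto hf.continuousAt hL).antisymm (hnonneg L hLK)
  obtain rfl : L = K := by_contra fun hLK' => hzero L ⟨hr0L, hLK.lt_of_ne hLK'⟩ hfL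
  exact hL

theorem tendsto_of_ge (hr : IsForwardSolution f r) (hf : Continuous f) {K : ℝ} (h0 : K ≤ r 0)
    (hnonpos : ∀ x, K ≤ x → f x ≤ 0) (hK : ∀ᶠ x in 𝓝[<] K, 0 < f x)
    (hzero : ∀ x ∈ Ioc K (r 0), f x ≠ 0) : Tendsto r atTop (𝓝 K) := by
  have := hr.neg.tendsto_of_le (by fun_prop) (neg_le_neg h0)
    (fun x hx => neg_nonneg.2 (hnonpos _ (le_neg_of_le_neg hx)))
    ((tendsto_neg_nhdsGT_neg.eventually (by simpa only [neg_neg] using hK)).mono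
      fun _ hx => neg_neg_of_pos hx)
    (fun x hx => neg_ne_zero.2 (hzero _ ⟨lt_neg_of_lt_neg hx.2, neg_le.1 hx.1⟩))
  simpa using this.neg

end IsForwardSolution

/-- Without an Allee effect (`m = 0`) the top predator always persists: for the scalar ODE
`r' = r²(c − w₄ r/D₃)` with positive parameters, any solution with positive initial value
tends to `c D₃/w₄` as `t → ∞`. -/
theorem top_predator_persistence_no_allee
    (c w₄ D₃ : ℝ) (hc : 0 < c) (hw₄ : 0 < w₄) (hD₃ : 0 < D₃)
    (r : ℝ → ℝ)
    (hode : ∀ t ∈ Set.Ici (0 : ℝ),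
      HasDerivWithinAt r ((r t) ^ 2 * (c - w₄ * r t / D₃)) (Set.Ici 0) t)
    (h0 : 0 < r 0) :
    Filter.Tendsto r Filter.atTop (nhds (c * D₃ / w₄)) := by
  set K := c * D₃ / w₄
  have hsol : IsForwardSolution (fun x => x ^ 2 * (c - w₄ * x / D₃)) r := hode
  have hK : 0 < K := by positivity
  have hrate : ∀ x, x ^ 2 * (c - w₄ * x / D₃) = w₄ / D₃ * x ^ 2 * (K - x) := fun x => by
    simp only [K]; field_simp
  rcases le_total (r 0) K with hle | hge
  · refine hsol.tendsto_of_le (by fun_prop) hle (fun x hx => ?_)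
      (eventually_nhdsWithin_of_forall fun x hx => ?_) (fun x hx => ?_) <;> simp only [hrate]
    · exact mul_nonneg (by positivity) (sub_nonneg.2 hx)
    · have : 0 < x := hK.trans hx
      exact mul_neg_of_pos_of_neg (by positivity) (sub_neg.2 hx)
    · have : 0 < x := h0.trans_le hx.1
      exact (mul_pos (by positivity) (sub_pos.2 hx.2)).ne'
  · refine hsol.tendsto_of_ge (by fun_prop) hge (fun x hx => ?_)
      (mem_of_superset (Ioo_mem_nhdsLT hK) fun x hx => ?_) (fun x hx => ?_) <;> simp only [hrate]
    · exact mul_nonpos_of_nonneg_of_nonpos (by positivity) (sub_nonpos.2 hx)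
    · have : 0 < x := hx.1
      exact mul_pos (by positivity) (sub_pos.2 hx.2)
    · have : 0 < x := hK.trans hx.1
      exact (mul_neg_of_pos_of_neg (by positivity) (sub_neg.2 hx.1)).ne
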